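/- arXiv:2104.15045 — 2 statements merged into one kernel-verified Lean document; each statement's English description precedes it below -/
import Mathlib

section
/- Let f : ℝ^m ⇒ ℝ be a set-valued mapping with convex graph, and Y ⊂ ℝ^m an open convex set on which f is nonempty-valued. If f is locally bounded from below at some y₀ ∈ Y, then for every y ∈ Y the set f(y) is bounded from below. -/
/-!
Convexity of the graph propagates a lower bound from `y₀` to any other point `y`: extend the
segment from `y` through `y₀` slightly beyond `y₀` to a point `w` still in the neighbourhood where
`f` is bounded below, and pick `ν ∈ f w`. Then `y₀ = a • y + b • w` with `a > 0`, and for every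
`μ ∈ f y` the value `a * μ + b * ν` lies in `f y₀`, hence is at least `m₀`; so `μ ≥ (m₀ - b * ν) / a`.
-/

open Filter Topology

theorem bddBelow_of_mem_openSegment_of_convex_graph {E : Type*} [AddCommGroup E] [Module ℝ E]
    {f : E → Set ℝ} (hf : Convex ℝ {p : E × ℝ | p.2 ∈ f p.1}) {y w y₀ : E}
    (hy₀ : y₀ ∈ openSegment ℝ y w) {ν : ℝ} (hν : ν ∈ f w) {m₀ : ℝ}
    (hlb : ∀ μ ∈ f y₀, m₀ ≤ μ) : BddBelow (f y) := by
  obtain ⟨a, b, ha, hb, hab, rfl⟩ := hy₀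
  refine ⟨(m₀ - b * ν) / a, fun μ hμ => ?_⟩
  have hmem : a * μ + b * ν ∈ f (a • y + b • w) := by
    simpa using hf (x := (y, μ)) (y := (w, ν)) hμ hν ha.le hb.le hab
  rw [div_le_iff₀ ha]
  linarith [hlb _ hmem]

theorem exists_mem_openSegment_of_mem_nhds {E : Type*} [AddCommGroup E] [Module ℝ E]
    [TopologicalSpace E] [IsTopologicalAddGroup E] [ContinuousSMul ℝ E] {A : Set E} {x : E}
    (hA : A ∈ 𝓝 x) (y : E) : ∃ w ∈ A, x ∈ openSegment ℝ y w := by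
  have hcont : Tendsto (AffineMap.lineMap y x : ℝ → E) (𝓝[>] 1) (𝓝 x) := by
    simpa using (AffineMap.lineMap_continuous (p := y) (q := x)).continuousAt
      (x := (1 : ℝ)) |>.tendsto.mono_left nhdsWithin_le_nhds
  obtain ⟨t, htA, ht⟩ := ((hcont.eventually hA).and self_mem_nhdsWithin).exists
  have ht0 : (0 : ℝ) < t := zero_lt_one.trans ht
  refine ⟨_, htA, ?_⟩
  rw [openSegment_eq_image_lineMap]
  refine ⟨t⁻¹, ⟨inv_pos.2 ht0, inv_lt_one_of_one_lt₀ ht⟩, ?_⟩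
  rw [AffineMap.lineMap_lineMap_right, inv_mul_cancel₀ ht0.ne', AffineMap.lineMap_apply_one]

theorem stmt_9_general (m : ℕ)
    (f : (Fin m → ℝ) → Set ℝ)
    (hf : Convex ℝ {p : (Fin m → ℝ) × ℝ | p.2 ∈ f p.1})
    (Y : Set (Fin m → ℝ))
    (hne : ∀ y ∈ Y, (f y).Nonempty)
    (y₀ : Fin m → ℝ)
    (hlb : ∃ m₀ : ℝ, ∃ A : Set (Fin m → ℝ), IsOpen A ∧ y₀ ∈ A ∧ A ⊆ Y ∧
      ∀ y ∈ A, ∀ μ ∈ f y, m₀ ≤ μ) :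
    ∀ y ∈ Y, BddBelow (f y) := by
  obtain ⟨m₀, A, hAo, hy₀A, hAY, hbd⟩ := hlb
  intro y _
  obtain ⟨w, hwA, hy₀⟩ := exists_mem_openSegment_of_mem_nhds (hAo.mem_nhds hy₀A) y
  obtain ⟨ν, hν⟩ := hne w (hAY hwA)
  exact bddBelow_of_mem_openSegment_of_convex_graph hf hy₀ hν (hbd y₀ hy₀A)

theorem stmt_9 (m : ℕ)
    (f : (Fin m → ℝ) → Set ℝ)
    (hf : Convex ℝ {p : (Fin m → ℝ) × ℝ | p.2 ∈ f p.1})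
    (Y : Set (Fin m → ℝ)) (hYopen : IsOpen Y) (hYconv : Convex ℝ Y)
    (hne : ∀ y ∈ Y, (f y).Nonempty)
    (y₀ : Fin m → ℝ) (hy₀ : y₀ ∈ Y)
    (hlb : ∃ m₀ : ℝ, ∃ A : Set (Fin m → ℝ), IsOpen A ∧ y₀ ∈ A ∧ A ⊆ Y ∧
      ∀ y ∈ A, ∀ μ ∈ f y, m₀ ≤ μ) :
    ∀ y ∈ Y, BddBelow (f y) :=
  stmt_9_general m f hf Y hne y₀ hlb
end

section
/- Let Y ⊂ ℝ^m be a nonempty open convex subset of the domain of F, and suppose F_φ (where F_φ(y) = { μ | ∃ x ∈ F(y), μ ≥ φ(x, y) }) has closed convex graph and is locally bounded from below at every point of Y. Then v(y) = inf_{x ∈ F(y)} φ(x, y) is finite for every y ∈ Y and v is a convex function on Y. -/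
/-!
On `Y` the value `v y` is the real number `inf Fφ y`: the sets `Fφ y` are nonempty and bounded
below there, and `Fφ y` is the upward closure of `φ(F y, y)`, so both have the same infimum.
The infimum of a set-valued map into `ℝ` with convex graph is convex: if `μᵢ ∈ Fφ yᵢ` lie within
`ε` of the infima, then `a μ₁ + b μ₂ ∈ Fφ (a y₁ + b y₂)`.
-/

theorem convexOn_sInf_of_convex_graph {E : Type*} [AddCommGroup E] [Module ℝ E] {G : E → Set ℝ} {Y : Set E} (hY : Convex ℝ Y)
    (hG : Convex ℝ {p : E × ℝ | p.2 ∈ G p.1}) (hne : ∀ y ∈ Y, (G y).Nonempty)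
    (hbdd : ∀ y ∈ Y, BddBelow (G y)) :
    ConvexOn ℝ Y fun y => sInf (G y) := by
  refine ⟨hY, fun y₁ hy₁ y₂ hy₂ a b ha hb hab => le_of_forall_pos_le_add fun ε hε => ?_⟩
  obtain ⟨μ₁, hμ₁, hμ₁_lt⟩ := exists_lt_of_csInf_lt (hne y₁ hy₁) (lt_add_of_pos_right _ hε)
  obtain ⟨μ₂, hμ₂, hμ₂_lt⟩ := exists_lt_of_csInf_lt (hne y₂ hy₂) (lt_add_of_pos_right _ hε)
  have hmem : a * μ₁ + b * μ₂ ∈ G (a • y₁ + b • y₂) :=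
    hG (x := (y₁, μ₁)) (y := (y₂, μ₂)) hμ₁ hμ₂ ha hb hab
  calc sInf (G (a • y₁ + b • y₂)) ≤ a * μ₁ + b * μ₂ :=
        csInf_le (hbdd _ (hY hy₁ hy₂ ha hb hab)) hmem
    _ ≤ a * (sInf (G y₁) + ε) + b * (sInf (G y₂) + ε) := by gcongr
    _ = a • sInf (G y₁) + b • sInf (G y₂) + ε := by
        simp only [smul_eq_mul]; linear_combination ε * hab

theorem sInf_epigraphical_eq_sInf_image {X Y : Type*} (φ : X × Y → ℝ) (F : Y → Set X) (y : Y) :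
    sInf {μ : ℝ | ∃ x ∈ F y, μ ≥ φ (x, y)} = sInf ((fun x => φ (x, y)) '' F y) :=
  csInf_eq_csInf_of_forall_exists_le (fun _ ⟨x, hx, hμ⟩ => ⟨_, ⟨x, hx, rfl⟩, hμ⟩)
    (fun _ ⟨x, hx, hμ⟩ => ⟨_, ⟨x, hx, le_of_eq hμ⟩, le_rfl⟩)

theorem EReal.sInf_image_coe {s : Set ℝ} (hne : s.Nonempty) (hbdd : BddBelow s) :
    sInf (((↑) : ℝ → EReal) '' s) = ↑(sInf s) :=
  (Monotone.map_csInf_of_continuousAt continuous_coe_real_ereal.continuousAt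
    EReal.coe_strictMono.monotone hne hbdd).symm

theorem stmt_11_general (n m : ℕ)
    (φ : (Fin n → ℝ) × (Fin m → ℝ) → ℝ)
    (F : (Fin m → ℝ) → Set (Fin n → ℝ))
    (Fφ : (Fin m → ℝ) → Set ℝ)
    (hFφ : ∀ y, Fφ y = {μ : ℝ | ∃ x ∈ F y, μ ≥ φ (x, y)})
    (hFφgraph : IsClosed {p : (Fin m → ℝ) × ℝ | p.2 ∈ Fφ p.1} ∧
                Convex ℝ {p : (Fin m → ℝ) × ℝ | p.2 ∈ Fφ p.1})
    (Y : Set (Fin m → ℝ))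
    (hYconv : Convex ℝ Y) (hYdom : ∀ y ∈ Y, (F y).Nonempty)
    (hlb : ∀ y₀ ∈ Y, ∃ m₀ : ℝ, ∃ A : Set (Fin m → ℝ), IsOpen A ∧ y₀ ∈ A ∧
      ∀ y ∈ A, ∀ μ ∈ Fφ y, m₀ ≤ μ)
    (v : (Fin m → ℝ) → EReal)
    (hv : ∀ y, v y = sInf ((fun x => (φ (x, y) : EReal)) '' F y)) :
    (∀ y ∈ Y, ∃ r : ℝ, v y = (r : EReal)) ∧
    ConvexOn ℝ Y (fun y => (v y).toReal) := by
  have hne : ∀ y ∈ Y, (Fφ y).Nonempty := fun y hy =>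
    let ⟨x, hx⟩ := hYdom y hy
    ⟨φ (x, y), hFφ y ▸ ⟨x, hx, le_rfl⟩⟩
  have hbdd : ∀ y ∈ Y, BddBelow (Fφ y) := fun y hy =>
    let ⟨m₀, _, _, hyA, hA⟩ := hlb y hy
    ⟨m₀, hA y hyA⟩
  have hv_eq : ∀ y ∈ Y, v y = ↑(sInf (Fφ y)) := by
    intro y hy
    have himage_sub : (fun x => φ (x, y)) '' F y ⊆ Fφ y := by
      rintro _ ⟨x, hx, rfl⟩
      exact hFφ y ▸ ⟨x, hx, le_rfl⟩
    rw [hv, ← Set.image_image ((↑) : ℝ → EReal) (fun x => φ (x, y)),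
      EReal.sInf_image_coe ((hYdom y hy).image _) ((hbdd y hy).mono himage_sub),
      hFφ, sInf_epigraphical_eq_sInf_image]
  refine ⟨fun y hy => ⟨_, hv_eq y hy⟩, ?_⟩
  refine (convexOn_sInf_of_convex_graph hYconv hFφgraph.2 hne hbdd).congr fun y hy => ?_
  simp only [hv_eq y hy, EReal.toReal_coe]

theorem stmt_11 (n m : ℕ)
    (φ : (Fin n → ℝ) × (Fin m → ℝ) → ℝ)
    (F : (Fin m → ℝ) → Set (Fin n → ℝ))
    (hφ : ConvexOn ℝ Set.univ φ)
    (hFgraph : IsClosed {p : (Fin n → ℝ) × (Fin m → ℝ) | p.1 ∈ F p.2} ∧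
               Convex ℝ {p : (Fin n → ℝ) × (Fin m → ℝ) | p.1 ∈ F p.2})
    (Fφ : (Fin m → ℝ) → Set ℝ)
    (hFφ : ∀ y, Fφ y = {μ : ℝ | ∃ x ∈ F y, μ ≥ φ (x, y)})
    (hFφgraph : IsClosed {p : (Fin m → ℝ) × ℝ | p.2 ∈ Fφ p.1} ∧
                Convex ℝ {p : (Fin m → ℝ) × ℝ | p.2 ∈ Fφ p.1})
    (Y : Set (Fin m → ℝ)) (hYne : Y.Nonempty) (hYopen : IsOpen Y)
    (hYconv : Convex ℝ Y) (hYdom : ∀ y ∈ Y, (F y).Nonempty)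
    (hlb : ∀ y₀ ∈ Y, ∃ m₀ : ℝ, ∃ A : Set (Fin m → ℝ), IsOpen A ∧ y₀ ∈ A ∧
      ∀ y ∈ A, ∀ μ ∈ Fφ y, m₀ ≤ μ)
    (v : (Fin m → ℝ) → EReal)
    (hv : ∀ y, v y = sInf ((fun x => (φ (x, y) : EReal)) '' F y)) :
    (∀ y ∈ Y, ∃ r : ℝ, v y = (r : EReal)) ∧
    ConvexOn ℝ Y (fun y => (v y).toReal) :=
  stmt_11_general n m φ F Fφ hFφ hFφgraph Y hYconv hYdom hlb v hv
end
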